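/- arXiv:2502.06433 — 3 statements merged into one kernel-verified Lean document; each statement's English description precedes it below -/
import Mathlib

section
/- Let n ≥ 2. Let u : ℝⁿ → ℝⁿ and 𝔲¹, …, 𝔲ⁿ⁻¹ : ℝⁿ → ℝ be of class C², and suppose 𝔲ⁱ(x', 0) = 0 for all x' ∈ ℝⁿ⁻¹ and each 1 ≤ i ≤ n−1. Define w : ℝⁿ → ℝⁿ by wⁱ := uⁱ + ∂ₙ𝔲ⁱ for 1 ≤ i ≤ n−1 and wⁿ := uⁿ − Σᵢ₌₁ⁿ⁻¹ ∂ᵢ𝔲ⁱ. Then: (i) div w = div u on ℝⁿ, so in particular w is divergence free on ℍ whenever u is; (ii) if uⁿ(x', 0) = 0 for all x', then wⁿ(x', 0) = 0 for all x'; (iii) if ∂ₙuⁱ(x', 0) = −Δ𝔲ⁱ(x', 0) for all x' and each 1 ≤ i ≤ n−1, then ∂ₙwⁱ(x', 0) = 0 for all x' and each 1 ≤ i ≤ n−1. -/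
/-- Partial derivative in direction `i` of a scalar field on `ℝⁿ`. -/
noncomputable def pd {n : ℕ} (i : Fin n) (f : (Fin n → ℝ) → ℝ) : (Fin n → ℝ) → ℝ :=
  fun x => fderiv ℝ f x (Pi.single i 1)

/-- Laplacian of a scalar field on `ℝⁿ`. -/
noncomputable def lap {n : ℕ} (f : (Fin n → ℝ) → ℝ) : (Fin n → ℝ) → ℝ :=
  fun x => ∑ i, pd i (pd i f) x

/-!
Each `𝔲ⁱ` vanishes on `{xₙ = 0}`, hence so do its tangential derivatives `∂ₖ𝔲ⁱ` and `∂ₖ∂ₖ𝔲ⁱ`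
(`k < n`); thus `∂ᵢ𝔲ⁱ = 0` and `Δ𝔲ⁱ = ∂ₙ∂ₙ𝔲ⁱ` on the boundary, which gives (ii) and (iii).
For (i), the corrections contribute `Σᵢ ∂ᵢ∂ₙ𝔲ⁱ − Σᵢ ∂ₙ∂ᵢ𝔲ⁱ`, which vanishes by the symmetry of
second derivatives of `C²` functions.
-/

open Fin

section PartialDerivatives

variable {n : ℕ}

lemma contDiff_pd {k l : WithTop ℕ∞} (j : Fin n) {f : (Fin n → ℝ) → ℝ} (hf : ContDiff ℝ l f)
    (hkl : k + 1 ≤ l) : ContDiff ℝ k (pd j f) :=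
  (hf.fderiv_right hkl).clm_apply contDiff_const

lemma pd_add (i : Fin n) {g h : (Fin n → ℝ) → ℝ} {x : Fin n → ℝ}
    (hg : DifferentiableAt ℝ g x) (hh : DifferentiableAt ℝ h x) :
    pd i (fun y => g y + h y) x = pd i g x + pd i h x := by
  simp [pd, fderiv_fun_add hg hh]

lemma pd_sub_sum {m : ℕ} (i : Fin n) {g : (Fin n → ℝ) → ℝ} {F : Fin m → (Fin n → ℝ) → ℝ}
    {x : Fin n → ℝ} (hg : DifferentiableAt ℝ g x) (hF : ∀ j, DifferentiableAt ℝ (F j) x) :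
    pd i (fun y => g y - ∑ j, F j y) x = pd i g x - ∑ j, pd i (F j) x := by
  simp [pd, fderiv_fun_sub hg (DifferentiableAt.fun_sum fun j _ => hF j),
    fderiv_fun_sum fun j _ => hF j]

lemma pd_comm {f : (Fin n → ℝ) → ℝ} (hf : ContDiff ℝ 2 f) (i j : Fin n) (x : Fin n → ℝ) :
    pd i (pd j f) x = pd j (pd i f) x := by
  have hdf : Differentiable ℝ (fderiv ℝ f) :=
    (hf.fderiv_right le_rfl).differentiable one_ne_zero
  have hpd : ∀ k l, pd l (pd k f) x = fderiv ℝ (fderiv ℝ f) x (Pi.single l 1) (Pi.single k 1) :=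
    fun k l => by
      change fderiv ℝ (fun y => fderiv ℝ f y (Pi.single k 1)) x (Pi.single l 1) = _
      simp [fderiv_clm_apply (hdf x) (differentiableAt_const _)]
  rw [hpd, hpd]
  exact hf.contDiffAt.isSymmSndFDerivAt (by simp) _ _

lemma pd_eq_zero_of_vanishes_on_hyperplane {ℓ k : Fin n} (hk : k ≠ ℓ) {f : (Fin n → ℝ) → ℝ}
    (h0 : ∀ y, y ℓ = 0 → f y = 0) {x : Fin n → ℝ} (hx : x ℓ = 0)
    (hf : DifferentiableAt ℝ f x) : pd k f x = 0 := by
  have hline : (fun t : ℝ => f (x + t • Pi.single k 1)) = fun _ => 0 :=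
    funext fun t => h0 _ (by simp [Pi.single_eq_of_ne' hk, hx])
  rw [pd, ← hf.lineDeriv_eq_fderiv, lineDeriv, hline, deriv_const]

lemma lap_eq_pd_pd_of_vanishes_on_hyperplane (ℓ : Fin n) {f : (Fin n → ℝ) → ℝ}
    (hf : ContDiff ℝ 2 f) (h0 : ∀ y, y ℓ = 0 → f y = 0) {x : Fin n → ℝ} (hx : x ℓ = 0) :
    lap f x = pd ℓ (pd ℓ f) x := by
  refine Finset.sum_eq_single ℓ (fun k _ hk => ?_) (by simp)
  refine pd_eq_zero_of_vanishes_on_hyperplane hk (fun y hy => ?_) hx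
    ((contDiff_pd k hf le_rfl).differentiable one_ne_zero x)
  exact pd_eq_zero_of_vanishes_on_hyperplane hk h0 hy (hf.differentiable two_ne_zero y)

end PartialDerivatives

section SlipCorrection

variable {m : ℕ}

noncomputable def slipCorrection (u : (Fin (m + 1) → ℝ) → Fin (m + 1) → ℝ)
    (v : Fin m → (Fin (m + 1) → ℝ) → ℝ) (x : Fin (m + 1) → ℝ) : Fin (m + 1) → ℝ :=
  snoc (fun i => u x i.castSucc + pd (last m) (v i) x)
    (u x (last m) - ∑ j, pd j.castSucc (v j) x)

variable {u : (Fin (m + 1) → ℝ) → Fin (m + 1) → ℝ} {v : Fin m → (Fin (m + 1) → ℝ) → ℝ}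

@[simp]
lemma slipCorrection_castSucc (x : Fin (m + 1) → ℝ) (i : Fin m) :
    slipCorrection u v x i.castSucc = u x i.castSucc + pd (last m) (v i) x := by
  simp [slipCorrection]

@[simp]
lemma slipCorrection_last (x : Fin (m + 1) → ℝ) :
    slipCorrection u v x (last m) = u x (last m) - ∑ j, pd j.castSucc (v j) x := by
  simp [slipCorrection]

lemma sum_pd_slipCorrection (hu : Differentiable ℝ u) (hv : ∀ i, ContDiff ℝ 2 (v i))
    (x : Fin (m + 1) → ℝ) :
    ∑ i, pd i (fun y => slipCorrection u v y i) x = ∑ i, pd i (fun y => u y i) x := by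
  have hu' (i : Fin (m + 1)) : Differentiable ℝ fun y => u y i := differentiable_pi.1 hu i
  have hpdv (k : Fin (m + 1)) (i : Fin m) : Differentiable ℝ (pd k (v i)) :=
    (contDiff_pd k (hv i) le_rfl).differentiable one_ne_zero
  have hcast (i : Fin m) : pd i.castSucc (fun y => slipCorrection u v y i.castSucc) x =
      pd i.castSucc (fun y => u y i.castSucc) x + pd (last m) (pd i.castSucc (v i)) x := by
    simp only [slipCorrection_castSucc]
    rw [pd_add _ (hu' _ x) (hpdv _ i x), pd_comm (hv i)]
  have hlast : pd (last m) (fun y => slipCorrection u v y (last m)) x =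
      pd (last m) (fun y => u y (last m)) x - ∑ i, pd (last m) (pd i.castSucc (v i)) x := by
    simp only [slipCorrection_last]
    exact pd_sub_sum _ (hu' _ x) fun i => hpdv _ i x
  rw [sum_univ_castSucc, sum_univ_castSucc, hlast]
  simp only [hcast, Finset.sum_add_distrib]
  ring

lemma slipCorrection_last_eq_zero (hv : ∀ i, Differentiable ℝ (v i))
    (hv0 : ∀ i y, y (last m) = 0 → v i y = 0) {x : Fin (m + 1) → ℝ} (hx : x (last m) = 0)
    (hu0 : u x (last m) = 0) : slipCorrection u v x (last m) = 0 := by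
  rw [slipCorrection_last, hu0, Finset.sum_eq_zero fun i _ =>
    pd_eq_zero_of_vanishes_on_hyperplane (castSucc_ne_last i) (hv0 i) hx (hv i x), sub_zero]

lemma pd_last_slipCorrection_castSucc_eq_zero (hu : Differentiable ℝ u)
    (hv : ∀ i, ContDiff ℝ 2 (v i)) (hv0 : ∀ i y, y (last m) = 0 → v i y = 0) (i : Fin m)
    {x : Fin (m + 1) → ℝ} (hx : x (last m) = 0)
    (hui : pd (last m) (fun y => u y i.castSucc) x = -lap (v i) x) :
    pd (last m) (fun y => slipCorrection u v y i.castSucc) x = 0 := by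
  simp only [slipCorrection_castSucc]
  rw [pd_add _ (differentiable_pi.1 hu _ x)
      ((contDiff_pd _ (hv i) le_rfl).differentiable one_ne_zero x), hui,
    lap_eq_pd_pd_of_vanishes_on_hyperplane _ (hv i) (hv0 i) hx, neg_add_cancel]

end SlipCorrection

theorem stmt6_general (n : ℕ) (ln : Fin n) (hln : (ln : ℕ) = n - 1)
    (ι : Fin (n - 1) → Fin n) (hι : ∀ i, (ι i : ℕ) = (i : ℕ))
    (u : (Fin n → ℝ) → Fin n → ℝ) (hu : ContDiff ℝ 2 u)
    (v : Fin (n - 1) → (Fin n → ℝ) → ℝ) (hv : ∀ i, ContDiff ℝ 2 (v i))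
    (hv0 : ∀ i, ∀ x, x ln = 0 → v i x = 0)
    (w : (Fin n → ℝ) → Fin n → ℝ)
    (hw : ∀ x i, w x i =
      if h : (i : ℕ) < n - 1 then u x i + pd ln (v ⟨i, h⟩) x
      else u x i - ∑ j, pd (ι j) (v j) x) :
    (∀ x, ∑ i, pd i (fun y => w y i) x = ∑ i, pd i (fun y => u y i) x) ∧
    ((∀ x, x ln = 0 → u x ln = 0) → ∀ x, x ln = 0 → w x ln = 0) ∧
    ((∀ i, ∀ x, x ln = 0 → pd ln (fun y => u y (ι i)) x = -(lap (v i) x)) →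
      ∀ i, ∀ x, x ln = 0 → pd ln (fun y => w y (ι i)) x = 0) := by
  obtain ⟨m, rfl⟩ : ∃ m, n = m + 1 := ⟨n - 1, by have := ln.pos; omega⟩
  obtain rfl : ln = last m := Fin.ext hln
  -- `Fin (m + 1 - 1)` and `Fin m` agree definitionally.
  obtain rfl : ι = castSucc := funext fun i => Fin.ext (hι i)
  obtain rfl : w = slipCorrection u v := by
    ext x i
    rw [hw]
    induction i using Fin.lastCases with
    | last => simp
    | cast i => simp
  have hu' : Differentiable ℝ u := hu.differentiable two_ne_zero
  exact ⟨sum_pd_slipCorrection hu' hv,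
    fun hu0 x hx => slipCorrection_last_eq_zero (fun i => (hv i).differentiable two_ne_zero)
      hv0 hx (hu0 x hx),
    fun hb i x hx => pd_last_slipCorrection_castSucc_eq_zero hu' hv hv0 i hx (hb i x hx)⟩

/-- Reduction of inhomogeneous Navier data to perfect slip in the half-space:
given `C²` fields `u : ℝⁿ → ℝⁿ` and `𝔲¹, …, 𝔲ⁿ⁻¹ : ℝⁿ → ℝ` vanishing on the flat
boundary `{xₙ = 0}`, the modified field `wⁱ = uⁱ + ∂ₙ𝔲ⁱ` (for `i < n`),
`wⁿ = uⁿ − Σᵢ ∂ᵢ𝔲ⁱ` satisfies: (i) `div w = div u`; (ii) `wⁿ = 0` on the boundary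
whenever `uⁿ = 0` there; (iii) `∂ₙwⁱ = 0` on the boundary (for `i < n`) whenever
`∂ₙuⁱ = −Δ𝔲ⁱ` there. Here `ln` is the last coordinate index and `ι` the inclusion
of the first `n − 1` indices. -/
theorem stmt6 (n : ℕ) (hn : 2 ≤ n) (ln : Fin n) (hln : (ln : ℕ) = n - 1)
    (ι : Fin (n - 1) → Fin n) (hι : ∀ i, (ι i : ℕ) = (i : ℕ))
    (u : (Fin n → ℝ) → Fin n → ℝ) (hu : ContDiff ℝ 2 u)
    (v : Fin (n - 1) → (Fin n → ℝ) → ℝ) (hv : ∀ i, ContDiff ℝ 2 (v i))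
    (hv0 : ∀ i, ∀ x, x ln = 0 → v i x = 0)
    (w : (Fin n → ℝ) → Fin n → ℝ)
    (hw : ∀ x i, w x i =
      if h : (i : ℕ) < n - 1 then u x i + pd ln (v ⟨i, h⟩) x
      else u x i - ∑ j, pd (ι j) (v j) x) :
    (∀ x, ∑ i, pd i (fun y => w y i) x = ∑ i, pd i (fun y => u y i) x) ∧
    ((∀ x, x ln = 0 → u x ln = 0) → ∀ x, x ln = 0 → w x ln = 0) ∧
    ((∀ i, ∀ x, x ln = 0 → pd ln (fun y => u y (ι i)) x = -(lap (v i) x)) →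
      ∀ i, ∀ x, x ln = 0 → pd ln (fun y => w y (ι i)) x = 0) :=
  stmt6_general n ln hln ι hι u hu v hv hv0 w hw
end

section
/- Let φ : ℝⁿ⁻¹ → ℝ be Lipschitz with constant K. Then 𝒯φ is smooth on the open upper half-space ℍ and |∂_{zₙ}(𝒯φ)(z', zₙ)| ≤ c K for all (z', zₙ) ∈ ℍ, where c := ∫_{ℝⁿ⁻¹} |(n−1)ζ(s) + s·∇ζ(s)|·|s| ds is a constant depending only on n and ζ. -/
/-!
Write `𝒯φ(x, t) = (φ ⋆ ζₜ)(x)`. Smoothness on the half-space is smoothness of a convolution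
with a compactly supported kernel depending smoothly on the parameter `t`. Differentiating the
dilation gives `∂ₜ ζₜ = -t⁻¹ wₜ` with `w(s) = div (ζ(s) s) = (n - 1) ζ(s) + ∇ζ(s)·s`, so
`∂ₜ 𝒯φ = -t⁻¹ (φ ⋆ wₜ)`. As `∫ ζₜ` does not depend on `t`, `∫ w = 0`; hence
`(φ ⋆ wₜ)(x) = ∫ wₜ(x - y) (φ(y) - φ(x)) dy`, which `|φ(y) - φ(x)| ≤ K |x - y|` and the
substitution `y = x - t s` bound by `t K ∫ |w(s)| |s| ds`.
-/

open MeasureTheory Metric Module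

variable {E : Type*} [NormedAddCommGroup E] [NormedSpace ℝ E]

noncomputable def dilate (ζ : E → ℝ) (t : ℝ) (u : E) : ℝ := (t ^ finrank ℝ E)⁻¹ * ζ (t⁻¹ • u)

-- `radialDiv ζ s = div (ζ(s) s)`, the `w` above.
noncomputable def radialDiv (ζ : E → ℝ) (s : E) : ℝ := finrank ℝ E * ζ s + fderiv ℝ ζ s s

section Pointwise

variable {χ : E → ℝ} {t : ℝ}

theorem dilate_eq_zero_of_mul_lt_norm {R : ℝ} (hR : tsupport χ ⊆ closedBall 0 R) (ht : 0 < t)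
    {u : E} (hu : t * R < ‖u‖) : dilate χ t u = 0 := by
  have hnot : t⁻¹ • u ∉ tsupport χ := fun h => by
    have := mem_closedBall_zero_iff.1 (hR h)
    rw [norm_smul, norm_inv, Real.norm_of_nonneg ht.le, inv_mul_le_iff₀ ht] at this
    linarith
  simp [dilate, image_eq_zero_of_notMem_tsupport hnot]

theorem abs_dilate_le {M : ℝ} (hM : ∀ s, |χ s| ≤ M) (ht : 0 ≤ t) (u : E) :
    |dilate χ t u| ≤ (t ^ finrank ℝ E)⁻¹ * M := by
  rw [dilate, abs_mul, abs_of_nonneg (by positivity)]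
  exact mul_le_mul_of_nonneg_left (hM _) (by positivity)

theorem abs_dilate_mul_norm (ht : 0 < t) (u : E) :
    |dilate χ t u| * ‖u‖ = t * dilate (fun s => |χ s| * ‖s‖) t u := by
  simp only [dilate, abs_mul, abs_inv, abs_pow, abs_of_pos ht, norm_smul, norm_inv,
    Real.norm_of_nonneg ht.le]
  field_simp

theorem Continuous.dilate (hχ : Continuous χ) (t : ℝ) : Continuous (dilate χ t) :=
  continuous_const.mul (hχ.comp (continuous_const_smul _))

theorem HasCompactSupport.dilate (hχ : HasCompactSupport χ) (ht : t ≠ 0) :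
    HasCompactSupport (dilate χ t) :=
  (hχ.comp_smul (inv_ne_zero ht)).mul_left

theorem hasDerivAt_dilate {ζ : E → ℝ} {u : E} (ht : t ≠ 0)
    (hζ : DifferentiableAt ℝ ζ (t⁻¹ • u)) :
    HasDerivAt (fun t => dilate ζ t u) (-t⁻¹ * dilate (radialDiv ζ) t u) t := by
  set d := finrank ℝ E
  have hpow : HasDerivAt (fun t : ℝ => (t ^ d)⁻¹) (-(d * t⁻¹ * (t ^ d)⁻¹)) t := by
    have h := hasDerivAt_zpow (-(d : ℤ)) t (Or.inl ht)
    rw [zpow_sub_one₀ ht] at h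
    simp only [zpow_neg, zpow_natCast, Int.cast_neg, Int.cast_natCast] at h
    exact h.congr_deriv (by ring)
  have hζt := hζ.hasFDerivAt.comp_hasDerivAt t ((hasDerivAt_inv ht).smul_const u)
  refine (hpow.mul hζt).congr_deriv ?_
  simp only [dilate, radialDiv, Function.comp_apply, map_smul, smul_eq_mul]
  field_simp
  ring

theorem abs_dilate_sub_le_indicator {R M a b : ℝ} (hR : tsupport χ ⊆ closedBall 0 R)
    (hR₀ : 0 ≤ R) (hM : ∀ s, |χ s| ≤ M) (ha : 0 < a) (hat : a ≤ t) (htb : t ≤ b) (x y : E) :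
    |dilate χ t (x - y)| ≤
      (closedBall x (b * R)).indicator (fun _ => (a ^ finrank ℝ E)⁻¹ * M) y := by
  by_cases hy : y ∈ closedBall x (b * R)
  · rw [Set.indicator_of_mem hy]
    have hM₀ : 0 ≤ M := (abs_nonneg _).trans (hM 0)
    calc |dilate χ t (x - y)| ≤ (t ^ finrank ℝ E)⁻¹ * M := abs_dilate_le hM (ha.trans_le hat).le _
      _ ≤ (a ^ finrank ℝ E)⁻¹ * M := by gcongr
  · rw [Set.indicator_of_notMem hy, dilate_eq_zero_of_mul_lt_norm hR (ha.trans_le hat), abs_zero]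
    rw [mem_closedBall, dist_eq_norm, norm_sub_rev, not_le] at hy
    exact (mul_le_mul_of_nonneg_right htb hR₀).trans_lt hy

theorem contDiffOn_dilate {n : ℕ∞} (hχ : ContDiff ℝ n χ) :
    ContDiffOn ℝ n (fun p : ℝ × E => dilate χ p.1 p.2) {p | p.1 ≠ 0} := by
  have hinv : ContDiffOn ℝ n (fun p : ℝ × E => p.1⁻¹) {p | p.1 ≠ 0} :=
    contDiffOn_fst.inv fun _ hp => hp
  exact (contDiffOn_fst.pow _).inv (fun _ hp => pow_ne_zero _ hp) |>.mul
    (hχ.comp_contDiffOn (hinv.smul contDiffOn_snd))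

end Pointwise

theorem fderiv_apply_zero_one_of_hasDerivAt {F : Type*} [NormedAddCommGroup F] [NormedSpace ℝ F]
    {f : E × ℝ → F} {x : E} {t : ℝ} {f' : F} (hf : DifferentiableAt ℝ f (x, t))
    (h : HasDerivAt (fun τ => f (x, τ)) f' t) : fderiv ℝ f (x, t) (0, 1) = f' :=
  (hf.hasFDerivAt.comp_hasDerivAt t ((hasDerivAt_const t x).prodMk (hasDerivAt_id t))).unique h

variable {ζ : E → ℝ}

theorem continuous_radialDiv (hζ : ContDiff ℝ 1 ζ) : Continuous (radialDiv ζ) :=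
  (continuous_const.mul hζ.continuous).add
    ((hζ.continuous_fderiv one_ne_zero).clm_apply continuous_id)

theorem tsupport_radialDiv_subset : tsupport (radialDiv ζ) ⊆ tsupport ζ := by
  refine closure_minimal (fun s hs => ?_) (isClosed_tsupport _)
  by_contra hnot
  have hfd : fderiv ℝ ζ s = 0 := by
    by_contra h
    exact hnot (support_fderiv_subset ℝ h)
  simp [radialDiv, image_eq_zero_of_notMem_tsupport hnot, hfd] at hs

theorem HasCompactSupport.radialDiv (hζ : HasCompactSupport ζ) :
    HasCompactSupport (radialDiv ζ) :=
  hζ.mono' (subset_closure.trans tsupport_radialDiv_subset)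

variable [MeasurableSpace E]

-- The paper's `𝒯φ` at `p = (z', zₙ)`, with `μ` in place of Lebesgue measure.
noncomputable def dilationExtension (μ : Measure E) (ζ φ : E → ℝ) (p : E × ℝ) : ℝ :=
  ∫ y, dilate ζ p.2 (p.1 - y) * φ y ∂μ

variable [BorelSpace E] (μ : Measure E)

theorem integrable_dilate_sub_mul {χ ψ : E → ℝ} (hχ : Continuous χ) (hχs : HasCompactSupport χ)
    (hψ : LocallyIntegrable ψ μ) {t : ℝ} (ht : t ≠ 0) (x : E) :
    Integrable (fun y => dilate χ t (x - y) * ψ y) μ :=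
  hψ.integrable_smul_left_of_hasCompactSupport ((hχ.dilate t).comp (continuous_sub_left x))
    ((hχs.dilate ht).comp_homeomorph (Homeomorph.subLeft x))

variable [FiniteDimensional ℝ E]

theorem hasDerivAt_dilationExtension_snd {ψ : E → ℝ} (hζ : ContDiff ℝ 1 ζ)
    (hζs : HasCompactSupport ζ) (hψ : LocallyIntegrable ψ μ) (x : E) {t₀ : ℝ} (ht₀ : 0 < t₀) :
    HasDerivAt (fun t => dilationExtension μ ζ ψ (x, t))
      (-t₀⁻¹ * dilationExtension μ (radialDiv ζ) ψ (x, t₀)) t₀ := by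
  obtain ⟨R, hR₀, hR⟩ := hζs.isCompact.isBounded.subset_ball_lt 0 0
  have hwR : tsupport (radialDiv ζ) ⊆ closedBall 0 R :=
    tsupport_radialDiv_subset.trans (hR.trans ball_subset_closedBall)
  have hw := continuous_radialDiv hζ
  obtain ⟨M, hM⟩ := hw.bounded_above_of_compact_support hζs.radialDiv
  set a := t₀ / 2 with ha_def
  have ha : 0 < a := half_pos ht₀
  have hball : ∀ t ∈ ball t₀ a, a ≤ t ∧ t ≤ 2 * t₀ := fun t ht => by
    rw [mem_ball, Real.dist_eq, abs_sub_lt_iff] at ht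
    constructor <;> linarith
  set C := (a ^ finrank ℝ E)⁻¹ * M
  set s := closedBall x (2 * t₀ * R)
  have key := hasDerivAt_integral_of_dominated_loc_of_deriv_le (μ := μ)
    (F := fun t y => dilate ζ t (x - y) * ψ y)
    (F' := fun t y => -t⁻¹ * (dilate (radialDiv ζ) t (x - y) * ψ y))
    (bound := fun y => a⁻¹ * s.indicator (fun y => C * ‖ψ y‖) y)
    (ball_mem_nhds t₀ ha) ?_ ?_ ?_ ?_ ?_ ?_
  · simpa only [dilationExtension, integral_const_mul] using key.2
  · filter_upwards [eventually_ne_nhds ht₀.ne'] with t ht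
    exact (integrable_dilate_sub_mul μ hζ.continuous hζs hψ ht x).aestronglyMeasurable
  · exact integrable_dilate_sub_mul μ hζ.continuous hζs hψ ht₀.ne' x
  · have hint := integrable_dilate_sub_mul μ hw hζs.radialDiv hψ ht₀.ne' x
    exact hint.aestronglyMeasurable.const_mul _
  · refine Filter.Eventually.of_forall fun y t ht => ?_
    obtain ⟨hat, htb⟩ := hball t ht
    have hbound := abs_dilate_sub_le_indicator hwR hR₀.le hM ha hat htb x y
    rw [norm_mul, norm_mul, norm_neg, norm_inv, Real.norm_of_nonneg (ha.trans_le hat).le,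
      Real.norm_eq_abs, Set.indicator_mul_left]
    gcongr
  · exact (IntegrableOn.integrable_indicator
      ((hψ.integrableOn_isCompact (isCompact_closedBall x _)).norm.const_mul C)
      measurableSet_closedBall).const_mul _
  · refine Filter.Eventually.of_forall fun y t ht => ?_
    have ht' : 0 < t := ha.trans_le (hball t ht).1
    exact ((hasDerivAt_dilate ht'.ne' ((hζ.differentiable one_ne_zero) _)).mul_const
      (ψ y)).congr_deriv (mul_assoc _ _ _)

theorem contDiffOn_dilationExtension {n : ℕ∞} {φ : E → ℝ} (hζ : ContDiff ℝ n ζ)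
    (hζs : HasCompactSupport ζ) (hφ : LocallyIntegrable φ μ) :
    ContDiffOn ℝ n (dilationExtension μ ζ φ) {p | 0 < p.2} := by
  obtain ⟨R, hR₀, hR⟩ := hζs.isCompact.isBounded.subset_ball_lt 0 0
  intro p hp
  set s : Set (E × ℝ) := {q | q.2 ∈ Set.Ioo 0 (p.2 + 1)}
  have hs : IsOpen s := isOpen_Ioo.preimage continuous_snd
  have hgs : ∀ q, ∀ u, q ∈ s → u ∉ closedBall (0 : E) ((p.2 + 1) * R) → dilate ζ q.2 u = 0 :=
    fun q u hq hu => dilate_eq_zero_of_mul_lt_norm (hR.trans ball_subset_closedBall) hq.1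
      ((mul_lt_mul_of_pos_right hq.2 hR₀).trans (by simpa using hu))
  have hg : ContDiffOn ℝ n (fun qu : (E × ℝ) × E => dilate ζ qu.1.2 qu.2) (s ×ˢ Set.univ) :=
    (contDiffOn_dilate hζ).comp (contDiff_fst.snd.prodMk contDiff_snd).contDiffOn
      fun qu hqu => hqu.1.1.ne'
  have hconv := contDiffOn_convolution_right_with_param_comp (μ := μ)
    (ContinuousLinearMap.mul ℝ ℝ).flip contDiffOn_fst hs (isCompact_closedBall 0 _) hgs hφ hg
  exact (hconv.contDiffAt (hs.mem_nhds ⟨hp, lt_add_one _⟩)).contDiffWithinAt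

variable [μ.IsAddHaarMeasure]

theorem integral_dilate_sub {t : ℝ} (ht : 0 < t) (χ : E → ℝ) (x : E) :
    ∫ y, dilate χ t (x - y) ∂μ = ∫ s, χ s ∂μ := by
  simp only [dilate]
  rw [integral_const_mul, integral_sub_left_eq_self (fun u => χ (t⁻¹ • u)) μ x,
    Measure.integral_comp_inv_smul_of_nonneg μ χ ht.le, smul_eq_mul, ← mul_assoc,
    inv_mul_cancel₀ (by positivity), one_mul]

theorem dilationExtension_one {χ : E → ℝ} (x : E) {t : ℝ} (ht : 0 < t) :
    dilationExtension μ χ (fun _ => 1) (x, t) = ∫ s, χ s ∂μ := by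
  simp [dilationExtension, integral_dilate_sub μ ht]

theorem integral_radialDiv_eq_zero (hζ : ContDiff ℝ 1 ζ) (hζs : HasCompactSupport ζ) :
    ∫ s, radialDiv ζ s ∂μ = 0 := by
  have hderiv := hasDerivAt_dilationExtension_snd μ hζ hζs (locallyIntegrable_const 1) 0 one_pos
  have hconst :
      (fun t => dilationExtension μ ζ (fun _ => 1) (0, t)) =ᶠ[nhds 1] fun _ => ∫ s, ζ s ∂μ := by
    filter_upwards [eventually_gt_nhds one_pos] with t ht using dilationExtension_one μ 0 ht
  have h := hderiv.unique ((hasDerivAt_const _ _).congr_of_eventuallyEq hconst)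
  rwa [dilationExtension_one μ 0 one_pos, inv_one, neg_one_mul, neg_eq_zero] at h

theorem abs_dilationExtension_le_of_integral_eq_zero {χ φ : E → ℝ} (hχ : Continuous χ)
    (hχs : HasCompactSupport χ) (hχ₀ : ∫ s, χ s ∂μ = 0) {K : NNReal} (hφ : LipschitzWith K φ)
    (x : E) {t : ℝ} (ht : 0 < t) :
    |dilationExtension μ χ φ (x, t)| ≤ t * K * ∫ s, |χ s| * ‖s‖ ∂μ := by
  set g : E → ℝ := fun s => |χ s| * ‖s‖
  have hg : Integrable (fun y => dilate g t (x - y)) μ := by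
    simpa only [mul_one] using integrable_dilate_sub_mul μ (χ := g) (hχ.abs.mul continuous_norm)
      hχs.abs.mul_right (locallyIntegrable_const 1) ht.ne' x
  have hsub : dilationExtension μ χ φ (x, t) = ∫ y, dilate χ t (x - y) * (φ y - φ x) ∂μ := by
    have hint := integrable_dilate_sub_mul μ hχ hχs hφ.continuous.locallyIntegrable ht.ne' x
    have hint₁ := integrable_dilate_sub_mul μ hχ hχs (locallyIntegrable_const (φ x)) ht.ne' x
    simp only [mul_sub]
    rw [integral_sub hint hint₁, integral_mul_const, integral_dilate_sub μ ht, hχ₀, zero_mul,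
      sub_zero, dilationExtension]
  have hpt : ∀ y, ‖dilate χ t (x - y) * (φ y - φ x)‖ ≤ K * (t * dilate g t (x - y)) := fun y => by
    rw [← abs_dilate_mul_norm ht, norm_mul, Real.norm_eq_abs, mul_left_comm]
    gcongr
    rw [← dist_eq_norm, ← dist_eq_norm, dist_comm x]
    exact hφ.dist_le_mul y x
  calc |dilationExtension μ χ φ (x, t)| ≤ ∫ y, K * (t * dilate g t (x - y)) ∂μ := by
        rw [hsub]; exact norm_integral_le_of_norm_le ((hg.const_mul t).const_mul K) (.of_forall hpt)
    _ = t * K * ∫ s, g s ∂μ := by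
        rw [integral_const_mul, integral_const_mul, integral_dilate_sub μ ht]; ring

theorem stmt13_general (n : ℕ) (hn : 2 ≤ n)
    (ζ : (Fin (n - 1) → ℝ) → ℝ) (hζsm : ContDiff ℝ (⊤ : ℕ∞) ζ)
    (hζsupp : tsupport ζ ⊆ Metric.closedBall 0 1)
    (φ : (Fin (n - 1) → ℝ) → ℝ) (K : NNReal) (hφ : LipschitzWith K φ)
    (T : ((Fin (n - 1) → ℝ) × ℝ) → ℝ)
    (hT : ∀ p : (Fin (n - 1) → ℝ) × ℝ, 0 < p.2 →
      T p = ∫ y', ((p.2 ^ (n - 1))⁻¹ * ζ ((p.2)⁻¹ • (p.1 - y'))) * φ y') :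
    ContDiffOn ℝ (⊤ : ℕ∞) T {p : (Fin (n - 1) → ℝ) × ℝ | 0 < p.2} ∧
    (∀ p : (Fin (n - 1) → ℝ) × ℝ, 0 < p.2 →
      |fderiv ℝ T p (0, 1)| ≤
        (∫ s, |((n : ℝ) - 1) * ζ s + fderiv ℝ ζ s s| * ‖s‖) * K) := by
  have hd : finrank ℝ (Fin (n - 1) → ℝ) = n - 1 := finrank_fin_fun ℝ
  have hζs : HasCompactSupport ζ :=
    (isCompact_closedBall 0 1).of_isClosed_subset (isClosed_tsupport ζ) hζsupp
  have hζ₁ : ContDiff ℝ 1 ζ := hζsm.of_le (by exact_mod_cast le_top)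
  have hφ₁ := hφ.continuous.locallyIntegrable (μ := volume)
  have hH : IsOpen {p : (Fin (n - 1) → ℝ) × ℝ | 0 < p.2} :=
    isOpen_lt continuous_const continuous_snd
  have hTe : ∀ p ∈ {p : (Fin (n - 1) → ℝ) × ℝ | 0 < p.2}, T p = dilationExtension volume ζ φ p :=
    fun p hp => by simpa only [dilationExtension, dilate, hd] using hT p hp
  have hsmooth := contDiffOn_dilationExtension volume hζsm hζs hφ₁
  refine ⟨hsmooth.congr hTe, ?_⟩
  rintro ⟨x, t⟩ (ht : 0 < t)
  have hdT : fderiv ℝ T (x, t) (0, 1) = -t⁻¹ * dilationExtension volume (radialDiv ζ) φ (x, t) := by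
    rw [Filter.EventuallyEq.fderiv_eq (Filter.eventually_of_mem (hH.mem_nhds ht) hTe)]
    exact fderiv_apply_zero_one_of_hasDerivAt
      ((hsmooth.contDiffAt (hH.mem_nhds ht)).differentiableAt (by simp))
      (hasDerivAt_dilationExtension_snd volume hζ₁ hζs hφ₁ x ht)
  have hw : ∀ s, radialDiv ζ s = ((n : ℝ) - 1) * ζ s + fderiv ℝ ζ s s := fun s => by
    rw [radialDiv, hd, Nat.cast_sub (by omega), Nat.cast_one]
  have hbound := abs_dilationExtension_le_of_integral_eq_zero volume (continuous_radialDiv hζ₁)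
    hζs.radialDiv (integral_radialDiv_eq_zero volume hζ₁ hζs) hφ x ht
  simp only [hdT, ← hw]
  rw [abs_mul, abs_neg, abs_inv, abs_of_pos ht]
  calc t⁻¹ * |dilationExtension volume (radialDiv ζ) φ (x, t)|
      ≤ t⁻¹ * (t * K * ∫ s, |radialDiv ζ s| * ‖s‖) := by gcongr
    _ = (∫ s, |radialDiv ζ s| * ‖s‖) * K := by field_simp

/-- The Maz'ya–Shaposhnikova extension `𝒯φ` of a `K`-Lipschitz function `φ : ℝⁿ⁻¹ → ℝ`
is smooth on the open upper half-space and its vertical derivative satisfies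
`|∂ₙ(𝒯φ)| ≤ c K` with `c = ∫ |(n−1)ζ(s) + s·∇ζ(s)|·|s| ds` depending only on `n`, `ζ`. -/
theorem stmt13 (n : ℕ) (hn : 2 ≤ n)
    (ζ : (Fin (n - 1) → ℝ) → ℝ) (hζsm : ContDiff ℝ (⊤ : ℕ∞) ζ)
    (hζsupp : tsupport ζ ⊆ Metric.closedBall 0 1)
    (hζpos : ∀ x, 0 ≤ ζ x) (hζint : (∫ x, ζ x) = 1)
    (φ : (Fin (n - 1) → ℝ) → ℝ) (K : NNReal) (hφ : LipschitzWith K φ)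
    (T : ((Fin (n - 1) → ℝ) × ℝ) → ℝ)
    (hT : ∀ p : (Fin (n - 1) → ℝ) × ℝ, 0 < p.2 →
      T p = ∫ y', ((p.2 ^ (n - 1))⁻¹ * ζ ((p.2)⁻¹ • (p.1 - y'))) * φ y') :
    ContDiffOn ℝ (⊤ : ℕ∞) T {p : (Fin (n - 1) → ℝ) × ℝ | 0 < p.2} ∧
    (∀ p : (Fin (n - 1) → ℝ) × ℝ, 0 < p.2 →
      |fderiv ℝ T p (0, 1)| ≤
        (∫ s, |((n : ℝ) - 1) * ζ s + fderiv ℝ ζ s s| * ‖s‖) * K) :=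
  stmt13_general n hn ζ hζsm hζsupp φ K hφ T hT
end

section
/- Let φ : ℝⁿ⁻¹ → ℝ be Lipschitz with constant K, let c ≥ 1 satisfy |∂_{zₙ}(𝒯φ)| ≤ cK on ℍ, and let N > cK. Then the map Φ(z', zₙ) := (z', N zₙ + (𝒯φ)(z', zₙ)) is a bijection from the open upper half-space ℍ onto the open epigraph Ω := {(x', xₙ) ∈ ℝⁿ⁻¹ × ℝ : xₙ > φ(x')}. -/
/-!
For fixed `z'`, the map `t ↦ N t + 𝒯φ(z', t)` has derivative at least `N - cK > 0` on `(0, ∞)`,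
hence is strictly increasing there. Since `ζ_t` is a probability density supported in the ball of
radius `t`, `|𝒯φ(z', t) - φ(z')| ≤ K t`; as `K ≤ cK < N`, the map therefore tends to `φ(z')` as
`t → 0⁺` and to `+∞` as `t → ∞`, and by the intermediate value theorem it maps `(0, ∞)`
bijectively onto `(φ(z'), ∞)`. The derivative bound carries information because `𝒯φ` is
differentiable on `ℍ`: near any `(z', t₀)` with `t₀ > 0` it is the convolution of the locally
integrable `φ` with a kernel that is `C¹` jointly in `(t, x)` and supported in a fixed ball.
-/

open MeasureTheory Filter Set Topology Module Metric

theorem bijOn_Ioi_of_strictMonoOn {f : ℝ → ℝ} {a : ℝ} (hmono : StrictMonoOn f (Ioi 0))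
    (hcont : ContinuousOn f (Ioi 0)) (h0 : Tendsto f (𝓝[>] 0) (𝓝 a))
    (htop : Tendsto f atTop atTop) : BijOn f (Ioi 0) (Ioi a) := by
  refine ⟨fun t (ht : 0 < t) => ?_, hmono.injOn, ?_⟩
  · have hle : a ≤ f (t / 2) := by
      refine le_of_tendsto h0 ?_
      filter_upwards [Ioo_mem_nhdsGT (half_pos ht)] with s hs
      exact (hmono hs.1 (half_pos ht) hs.2).le
    exact hle.trans_lt (hmono (half_pos ht) ht (half_lt_self ht))
  · exact isPreconnected_Ioi.intermediate_value_Ioi (l₁ := 𝓝[>] 0) inf_le_right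
      (le_principal_iff.2 (Ioi_mem_atTop 0)) hcont h0 htop

theorem bijOn_prod_fiberwise {X β γ : Type*} {s : X → Set β} {t : X → Set γ} {f : X → β → γ}
    (h : ∀ x, BijOn (f x) (s x) (t x)) :
    BijOn (fun p : X × β => (p.1, f p.1 p.2)) {p | p.2 ∈ s p.1} {p | p.2 ∈ t p.1} := by
  refine ⟨fun p hp => (h p.1).mapsTo hp, fun p hp q hq hpq => ?_, ?_⟩
  · obtain ⟨h1, h2⟩ := Prod.mk.inj hpq
    exact Prod.ext h1 ((h q.1).injOn (h1 ▸ hp) hq (h1 ▸ h2))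
  · rintro ⟨x, c⟩ hc
    obtain ⟨b, hb, rfl⟩ := (h x).surjOn hc
    exact ⟨(x, b), hb, rfl⟩

theorem tendsto_nhdsGT_zero_of_abs_sub_le {f : ℝ → ℝ} {a C : ℝ}
    (h : ∀ t > 0, |f t - a| ≤ C * t) : Tendsto f (𝓝[>] 0) (𝓝 a) := by
  have hlin : ∀ σ : ℝ, Tendsto (fun t => a + σ * C * t) (𝓝[>] 0) (𝓝 a) := fun σ =>
    ((by fun_prop : Continuous fun t : ℝ => a + σ * C * t).tendsto' 0 a (by simp)).mono_left
      nhdsWithin_le_nhds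
  refine tendsto_of_tendsto_of_tendsto_of_le_of_le' (hlin (-1)) (hlin 1) ?_ ?_ <;>
    filter_upwards [self_mem_nhdsWithin] with t ht <;>
    linarith [abs_le.1 (h t ht)]

theorem bijOn_graph_of_abs_sub_le {X : Type*} [NormedAddCommGroup X] [NormedSpace ℝ X]
    {T : X × ℝ → ℝ} {φ : X → ℝ} {K M N : ℝ}
    (hdiff : ∀ p : X × ℝ, 0 < p.2 → DifferentiableAt ℝ T p)
    (hder : ∀ p : X × ℝ, 0 < p.2 → |fderiv ℝ T p (0, 1)| ≤ M)
    (hclose : ∀ z t, 0 < t → |T (z, t) - φ z| ≤ K * t) (hM : M < N) (hK : K < N) :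
    BijOn (fun p : X × ℝ => (p.1, N * p.2 + T p)) {p | 0 < p.2} {p | φ p.1 < p.2} := by
  refine bijOn_prod_fiberwise (s := fun _ => Ioi 0) (t := fun z => Ioi (φ z))
    (f := fun z s => N * s + T (z, s)) fun z => ?_
  have hderiv : ∀ t > 0,
      HasDerivAt (fun s => N * s + T (z, s)) (N + fderiv ℝ T (z, t) (0, 1)) t := fun t ht => by
    have hvert := (hdiff (z, t) ht).hasFDerivAt.comp_hasDerivAt t
      ((hasDerivAt_const t z).prodMk (hasDerivAt_id t))
    have := ((hasDerivAt_id' t).const_mul N).fun_add hvert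
    rwa [mul_one] at this
  have hcont : ContinuousOn (fun s => N * s + T (z, s)) (Ioi 0) := fun t ht =>
    (hderiv t ht).continuousAt.continuousWithinAt
  refine bijOn_Ioi_of_strictMonoOn ?_ hcont ?_ ?_
  · refine strictMonoOn_of_deriv_pos (convex_Ioi 0) hcont fun t ht => ?_
    rw [interior_Ioi] at ht
    rw [(hderiv t ht).deriv]
    linarith [neg_abs_le (fderiv ℝ T (z, t) (0, 1)), hder (z, t) ht]
  · refine tendsto_nhdsGT_zero_of_abs_sub_le (C := |N| + K) fun t ht => ?_
    calc |N * t + T (z, t) - φ z| ≤ |N * t| + |T (z, t) - φ z| := by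
          rw [add_sub_assoc]; exact abs_add_le _ _
      _ ≤ (|N| + K) * t := by
          rw [abs_mul, abs_of_pos ht, add_mul]; linarith [hclose z t ht]
  · refine tendsto_atTop_mono' _ ?_ (tendsto_atTop_add_const_right _ (φ z)
      (tendsto_id.const_mul_atTop (sub_pos.2 hK)))
    filter_upwards [Ioi_mem_atTop 0] with t ht
    rw [id]
    linarith [abs_le.1 (hclose z t ht)]

section Kernel

variable {E : Type*} [NormedAddCommGroup E] [NormedSpace ℝ E]

noncomputable def scaledKernel (ζ : E → ℝ) (t : ℝ) (x : E) : ℝ :=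
  (t ^ finrank ℝ E)⁻¹ * ζ (t⁻¹ • x)

variable {ζ : E → ℝ} {t : ℝ}

theorem scaledKernel_eq_zero_of_lt_norm (hζ : Function.support ζ ⊆ closedBall 0 1) (ht : 0 < t)
    {x : E} (hx : t < ‖x‖) : scaledKernel ζ t x = 0 := by
  have hout : t⁻¹ • x ∉ closedBall (0 : E) 1 := by
    rw [mem_closedBall_zero_iff, norm_smul, norm_inv, Real.norm_of_nonneg ht.le, not_le,
      one_lt_inv_mul₀ ht]
    exact hx
  rw [scaledKernel, Function.notMem_support.1 (fun h => hout (hζ h)), mul_zero]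

theorem scaledKernel_nonneg (hζ : ∀ x, 0 ≤ ζ x) (ht : 0 ≤ t) (x : E) : 0 ≤ scaledKernel ζ t x :=
  mul_nonneg (inv_nonneg.2 (pow_nonneg ht _)) (hζ _)

theorem integrable_scaledKernel_mul [ProperSpace E] [MeasurableSpace E] [BorelSpace E]
    (μ : Measure E) [IsFiniteMeasureOnCompacts μ] (hζc : Continuous ζ)
    (hζ : Function.support ζ ⊆ closedBall 0 1) (ht : 0 < t) (z : E) {g : E → ℝ}
    (hg : Continuous g) :
    Integrable (fun y => scaledKernel ζ t (z - y) * g y) μ := by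
  refine Continuous.integrable_of_hasCompactSupport (by unfold scaledKernel; fun_prop)
    (HasCompactSupport.intro (isCompact_closedBall z t) fun y hy => ?_)
  rw [mem_closedBall, not_le, dist_eq_norm_sub'] at hy
  rw [scaledKernel_eq_zero_of_lt_norm hζ ht hy, zero_mul]

theorem integral_scaledKernel [FiniteDimensional ℝ E] [MeasurableSpace E] [BorelSpace E]
    (μ : Measure E) [μ.IsAddHaarMeasure] (ht : 0 < t) (z : E) :
    ∫ y, scaledKernel ζ t (z - y) ∂μ = ∫ x, ζ x ∂μ := by
  simp only [scaledKernel]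
  rw [integral_const_mul, integral_sub_left_eq_self (fun x => ζ (t⁻¹ • x)) μ z,
    Measure.integral_comp_inv_smul_of_nonneg μ ζ ht.le, smul_eq_mul,
    inv_mul_cancel_left₀ (pow_ne_zero _ ht.ne')]

variable [FiniteDimensional ℝ E] [MeasurableSpace E] [BorelSpace E]

noncomputable def mollifiedExtension (μ : Measure E) (ζ φ : E → ℝ) (p : E × ℝ) : ℝ :=
  ∫ y, scaledKernel ζ p.2 (p.1 - y) * φ y ∂μ

theorem abs_mollifiedExtension_sub_le (μ : Measure E) [μ.IsAddHaarMeasure] (hζc : Continuous ζ)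
    (hζ : Function.support ζ ⊆ closedBall 0 1) (hζpos : ∀ x, 0 ≤ ζ x) (hζint : ∫ x, ζ x ∂μ = 1)
    {φ : E → ℝ} {K : NNReal} (hφ : LipschitzWith K φ) (z : E) (ht : 0 < t) :
    |mollifiedExtension μ ζ φ (z, t) - φ z| ≤ K * t := by
  set k : E → ℝ := fun y => scaledKernel ζ t (z - y)
  have hk : ∫ y, k y ∂μ = 1 := (integral_scaledKernel μ ht z).trans hζint
  have hint : ∀ {g : E → ℝ}, Continuous g → Integrable (fun y => k y * g y) μ :=
    integrable_scaledKernel_mul μ hζc hζ ht z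
  have hsub : mollifiedExtension μ ζ φ (z, t) - φ z = ∫ y, k y * (φ y - φ z) ∂μ := by
    simp only [mul_sub]
    rw [integral_sub (hint hφ.continuous) (hint continuous_const), integral_mul_const, hk, one_mul]
    rfl
  have hpt : ∀ y, ‖k y * (φ y - φ z)‖ ≤ k y * (K * t) := fun y => by
    rcases le_or_gt ‖z - y‖ t with hy | hy
    · rw [norm_mul, Real.norm_of_nonneg (scaledKernel_nonneg hζpos ht.le _)]
      gcongr
      · exact scaledKernel_nonneg hζpos ht.le _
      calc ‖φ y - φ z‖ ≤ K * ‖y - z‖ := hφ.norm_sub_le y z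
        _ ≤ K * t := by rw [norm_sub_rev]; gcongr
    · simp [k, scaledKernel_eq_zero_of_lt_norm hζ ht hy]
  calc |mollifiedExtension μ ζ φ (z, t) - φ z| = ‖∫ y, k y * (φ y - φ z) ∂μ‖ := by
        rw [hsub, Real.norm_eq_abs]
    _ ≤ ∫ y, k y * (K * t) ∂μ :=
        norm_integral_le_of_norm_le (hint continuous_const) (.of_forall hpt)
    _ = K * t := by rw [integral_mul_const, hk, one_mul]

theorem differentiableAt_mollifiedExtension (μ : Measure E) [μ.IsAddHaarMeasure]
    (hζ : ContDiff ℝ 1 ζ) (hζs : Function.support ζ ⊆ closedBall 0 1) {φ : E → ℝ}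
    (hφ : LocallyIntegrable φ μ) {p : E × ℝ} (hp : 0 < p.2) :
    DifferentiableAt ℝ (mollifiedExtension μ ζ φ) p := by
  have hg : ContDiffOn ℝ 1 (fun q : ℝ × E => scaledKernel ζ q.1 q.2)
      (Ioo 0 (2 * p.2) ×ˢ univ) := by
    refine ContDiffOn.mul ?_ (hζ.comp_contDiffOn ?_)
    · exact (contDiff_fst.contDiffOn.pow _).inv fun q hq => pow_ne_zero _ hq.1.1.ne'
    · exact (contDiff_fst.contDiffOn.inv fun q hq => hq.1.1.ne').smul contDiff_snd.contDiffOn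
  have hconv := hasFDerivAt_convolution_right_with_param (μ := μ)
    (ContinuousLinearMap.mul ℝ ℝ).flip (g := scaledKernel ζ) isOpen_Ioo
    (isCompact_closedBall (0 : E) (2 * p.2)) (fun s x hs hx =>
      scaledKernel_eq_zero_of_lt_norm hζs hs.1 (hs.2.trans (by simpa using hx))) hφ hg
    (p.2, p.1) ⟨hp, by linarith⟩
  have hswap : DifferentiableAt ℝ (fun q : E × ℝ => (q.2, q.1)) p :=
    differentiableAt_snd.prodMk differentiableAt_fst
  exact (hconv.differentiableAt.comp p hswap :)

end Kernel

theorem stmt15_general (n : ℕ)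
    (ζ : (Fin (n - 1) → ℝ) → ℝ) (hζsm : ContDiff ℝ (⊤ : ℕ∞) ζ)
    (hζsupp : tsupport ζ ⊆ Metric.closedBall 0 1)
    (hζpos : ∀ x, 0 ≤ ζ x) (hζint : (∫ x, ζ x) = 1)
    (φ : (Fin (n - 1) → ℝ) → ℝ) (K : NNReal) (hφ : LipschitzWith K φ)
    (T : ((Fin (n - 1) → ℝ) × ℝ) → ℝ)
    (hT : ∀ p : (Fin (n - 1) → ℝ) × ℝ, 0 < p.2 →
      T p = ∫ y', ((p.2 ^ (n - 1))⁻¹ * ζ ((p.2)⁻¹ • (p.1 - y'))) * φ y')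
    (c : ℝ) (hc : 1 ≤ c)
    (hder : ∀ p : (Fin (n - 1) → ℝ) × ℝ, 0 < p.2 → |fderiv ℝ T p (0, 1)| ≤ c * K)
    (N : ℝ) (hN : c * K < N) :
    Set.BijOn (fun p : (Fin (n - 1) → ℝ) × ℝ => (p.1, N * p.2 + T p))
      {p : (Fin (n - 1) → ℝ) × ℝ | 0 < p.2}
      {p : (Fin (n - 1) → ℝ) × ℝ | φ p.1 < p.2} := by
  have hT' : ∀ p : (Fin (n - 1) → ℝ) × ℝ, 0 < p.2 → T p = mollifiedExtension volume ζ φ p :=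
    fun p hp => by rw [hT p hp, mollifiedExtension]; simp only [scaledKernel, finrank_fin_fun]
  have hζs : Function.support ζ ⊆ closedBall 0 1 := (subset_tsupport ζ).trans hζsupp
  have hdiff : ∀ p : (Fin (n - 1) → ℝ) × ℝ, 0 < p.2 → DifferentiableAt ℝ T p := fun p hp =>
    (differentiableAt_mollifiedExtension volume (hζsm.of_le (by exact_mod_cast le_top)) hζs
      hφ.continuous.locallyIntegrable hp).congr_of_eventuallyEq
      (eventually_of_mem ((isOpen_lt continuous_const continuous_snd).mem_nhds hp) hT')
  have hclose : ∀ z t, 0 < t → |T (z, t) - φ z| ≤ K * t := fun z t ht => by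
    rw [hT' (z, t) ht]
    exact abs_mollifiedExtension_sub_le volume hζsm.continuous hζs hζpos hζint hφ z ht
  exact bijOn_graph_of_abs_sub_le hdiff hder hclose hN
    ((le_mul_of_one_le_left K.coe_nonneg hc).trans_lt hN)

/-- If `φ : ℝⁿ⁻¹ → ℝ` is `K`-Lipschitz, `c ≥ 1` satisfies `|∂ₙ(𝒯φ)| ≤ cK` on the open
half-space and `N > cK`, then `Φ(z', zₙ) = (z', N zₙ + (𝒯φ)(z', zₙ))` is a bijection
from the open upper half-space onto the open epigraph `{(x', xₙ) : xₙ > φ(x')}`. -/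
theorem stmt15 (n : ℕ) (hn : 2 ≤ n)
    (ζ : (Fin (n - 1) → ℝ) → ℝ) (hζsm : ContDiff ℝ (⊤ : ℕ∞) ζ)
    (hζsupp : tsupport ζ ⊆ Metric.closedBall 0 1)
    (hζpos : ∀ x, 0 ≤ ζ x) (hζint : (∫ x, ζ x) = 1)
    (φ : (Fin (n - 1) → ℝ) → ℝ) (K : NNReal) (hφ : LipschitzWith K φ)
    (T : ((Fin (n - 1) → ℝ) × ℝ) → ℝ)
    (hT : ∀ p : (Fin (n - 1) → ℝ) × ℝ, 0 < p.2 →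
      T p = ∫ y', ((p.2 ^ (n - 1))⁻¹ * ζ ((p.2)⁻¹ • (p.1 - y'))) * φ y')
    (c : ℝ) (hc : 1 ≤ c)
    (hder : ∀ p : (Fin (n - 1) → ℝ) × ℝ, 0 < p.2 → |fderiv ℝ T p (0, 1)| ≤ c * K)
    (N : ℝ) (hN : c * K < N) :
    Set.BijOn (fun p : (Fin (n - 1) → ℝ) × ℝ => (p.1, N * p.2 + T p))
      {p : (Fin (n - 1) → ℝ) × ℝ | 0 < p.2}
      {p : (Fin (n - 1) → ℝ) × ℝ | φ p.1 < p.2} :=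
  stmt15_general n ζ hζsm hζsupp hζpos hζint φ K hφ T hT c hc hder N hN
end
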